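/- Let E be a set of primes and, for a positive integer N, let Ω*_E(N) := Σ_{p^k ‖ N, p ∈ E, k > 1} k denote the number of prime divisors of N counted with multiplicity that lie in E and appear in the factorization of N to an exponent greater than 1. Then for every integer t ≥ 2 and every positive integer N with Ω*_E(N) ≥ t, there exist an integer s ≥ 1, distinct primes p_1, …, p_s ∈ E, integers α_1, …, α_s ≥ 2 with α_1 + ⋯ + α_s ∈ {t, t+1}, integers β_1 ≥ α_1, …, β_s ≥ α_s, and a positive integer m with gcd(m, p_1 ⋯ p_s) = 1, such that N = m · p_1^{β_1} ⋯ p_s^{β_s}. -/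
import Mathlib


open scoped Classical

/-- `OmegaStar E N` is the number of prime divisors of `N`, counted with multiplicity,
that lie in `E` and appear in the factorization of `N` to an exponent greater than `1`. -/
noncomputable def OmegaStar (E : Set ℕ) (N : ℕ) : ℕ :=
  ∑ p ∈ N.primeFactors.filter (fun p => p ∈ E ∧ 2 ≤ N.factorization p),
    N.factorization p

lemma key_select (e : ℕ → ℕ) (S : Finset ℕ) :
    ∀ t : ℕ, 2 ≤ t → (∀ p ∈ S, 2 ≤ e p) → t ≤ ∑ p ∈ S, e p →
    ∃ T : Finset ℕ, T ⊆ S ∧ T.Nonempty ∧ ∃ a : ℕ → ℕ,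
      (∀ p ∈ T, 2 ≤ a p ∧ a p ≤ e p) ∧
      ((∑ p ∈ T, a p) = t ∨ (∑ p ∈ T, a p) = t + 1) := by
  induction S using Finset.strongInduction with
  | _ S ih =>
    intro t ht he hsum
    have hSne : S.Nonempty := by
      rcases S.eq_empty_or_nonempty with rfl | h
      · simp at hsum; omega
      · exact h
    obtain ⟨p, hp⟩ := hSne
    have hsplit : e p + ∑ q ∈ S.erase p, e q = ∑ q ∈ S, e q :=
      Finset.add_sum_erase S e hp
    by_cases h1 : t ≤ e p
    · refine ⟨{p}, by simpa using hp, ⟨p, by simp⟩, fun _ => t, ?_, ?_⟩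
      · intro q hq; simp at hq; subst hq; exact ⟨ht, h1⟩
      · simp
    · push_neg at h1
      by_cases h2 : e p + 1 = t
      · -- e p = t - 1: take {p, q} with a p = e p, a q = 2
        have herase : (S.erase p).Nonempty := by
          rcases (S.erase p).eq_empty_or_nonempty with hemp | h
          · rw [hemp] at hsplit; simp at hsplit; omega
          · exact h
        obtain ⟨q, hq⟩ := herase
        have hqS : q ∈ S := Finset.mem_of_mem_erase hq
        have hqp : q ≠ p := Finset.ne_of_mem_erase hq
        refine ⟨{p, q}, ?_, ⟨p, by simp⟩, fun x => if x = p then e p else 2, ?_, ?_⟩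
        · intro x hx; simp at hx; rcases hx with rfl | rfl <;> assumption
        · intro x hx; simp at hx; rcases hx with rfl | rfl
          · exact ⟨by simp [he _ hp], by simp⟩
          · exact ⟨by simp [hqp], by simp [hqp, he _ hqS]⟩
        · right
          rw [Finset.sum_pair (by exact fun h => hqp h.symm)]
          simp [hqp]
          omega
      · -- e p + 2 ≤ t: recurse
        have h3 : 2 ≤ t - e p := by omega
        have h4 : t - e p ≤ ∑ q ∈ S.erase p, e q := by omega
        obtain ⟨T', hT'sub, hT'ne, a', ha', hsum'⟩ :=
          ih (S.erase p) (Finset.erase_ssubset hp) (t - e p) h3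
            (fun q hq => he q (Finset.mem_of_mem_erase hq)) h4
        have hpT' : p ∉ T' := fun hmem => (Finset.ne_of_mem_erase (hT'sub hmem)) rfl
        refine ⟨insert p T', ?_, ⟨p, Finset.mem_insert_self p T'⟩,
          Function.update a' p (e p), ?_, ?_⟩
        · intro x hx
          rcases Finset.mem_insert.mp hx with rfl | hx
          · exact hp
          · exact Finset.mem_of_mem_erase (hT'sub hx)
        · intro x hx
          rcases Finset.mem_insert.mp hx with rfl | hx
          · simp [Function.update_self]; exact he x hp
          · rw [Function.update_of_ne (ne_of_mem_of_not_mem hx hpT')]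
            exact ha' x hx
        · rw [Finset.sum_insert hpT', Function.update_self]
          have : ∑ q ∈ T', Function.update a' p (e p) q = ∑ q ∈ T', a' q :=
            Finset.sum_congr rfl fun q hq =>
              Function.update_of_ne (ne_of_mem_of_not_mem hq hpT') _ _
          rw [this]
          omega

theorem stmt_17 (E : Set ℕ) (hE : ∀ p ∈ E, Nat.Prime p)
    (t : ℕ) (ht : 2 ≤ t) (N : ℕ) (hN : 0 < N) (h : t ≤ OmegaStar E N) :
    ∃ (s : ℕ) (p : Fin s → ℕ) (α β : Fin s → ℕ) (m : ℕ),
      1 ≤ s ∧ Function.Injective p ∧ (∀ i, p i ∈ E) ∧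
      (∀ i, 2 ≤ α i) ∧ ((∑ i, α i) = t ∨ (∑ i, α i) = t + 1) ∧
      (∀ i, α i ≤ β i) ∧ 0 < m ∧ Nat.Coprime m (∏ i, p i) ∧
      N = m * ∏ i, p i ^ β i := by
  set F := N.primeFactors.filter (fun p => p ∈ E ∧ 2 ≤ N.factorization p) with hF
  have he : ∀ p ∈ F, 2 ≤ N.factorization p := fun p hp =>
    (Finset.mem_filter.mp hp).2.2
  obtain ⟨T, hTF, hTne, a, ha, hsuma⟩ := key_select (N.factorization) F t ht he h
  have hTpf : T ⊆ N.primeFactors := hTF.trans (Finset.filter_subset _ _)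
  have hTE : ∀ p ∈ T, p ∈ E := fun p hp => (Finset.mem_filter.mp (hTF hp)).2.1
  have hTprime : ∀ p ∈ T, Nat.Prime p := fun p hp =>
    Nat.prime_of_mem_primeFactors (hTpf hp)
  -- enumeration
  set s := T.card with hs
  have hs1 : 1 ≤ s := Finset.card_pos.mpr hTne
  set iso := T.orderIsoOfFin rfl with hiso
  set p : Fin s → ℕ := fun i => (iso i : ℕ) with hp
  have hpinj : Function.Injective p :=
    Subtype.val_injective.comp (iso.injective)
  have hpmem : ∀ i, p i ∈ T := fun i => (iso i).2
  have hsum_eq : ∀ f : ℕ → ℕ, (∑ i, f (p i)) = ∑ q ∈ T, f q := by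
    intro f
    rw [← Finset.sum_coe_sort T f]
    exact Fintype.sum_equiv iso.toEquiv _ _ (fun i => rfl)
  have hprod_eq : ∀ f : ℕ → ℕ, (∏ i, f (p i)) = ∏ q ∈ T, f q := by
    intro f
    rw [← Finset.prod_coe_sort T f]
    exact Fintype.prod_equiv iso.toEquiv _ _ (fun i => rfl)
  set m := ∏ q ∈ N.primeFactors \ T, q ^ N.factorization q with hm
  refine ⟨s, p, fun i => a (p i), fun i => N.factorization (p i), m,
    hs1, hpinj, fun i => hTE _ (hpmem i), fun i => (ha _ (hpmem i)).1, ?_,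
    fun i => (ha _ (hpmem i)).2, ?_, ?_, ?_⟩
  · rw [hsum_eq]; exact hsuma
  · exact Finset.prod_pos fun q hq =>
      pow_pos (Nat.prime_of_mem_primeFactors (Finset.mem_sdiff.mp hq).1).pos _
  · rw [hprod_eq (fun q => q)]
    apply Nat.Coprime.prod_left
    intro q hq
    apply Nat.Coprime.prod_right
    intro r hr
    have hqprime := Nat.prime_of_mem_primeFactors (Finset.mem_sdiff.mp hq).1
    have hrprime := hTprime r hr
    have hne : q ≠ r := fun hqr => (Finset.mem_sdiff.mp hq).2 (hqr ▸ hr)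
    exact Nat.Coprime.pow_left _ ((Nat.coprime_primes hqprime hrprime).mpr hne)
  · rw [hprod_eq (fun q => q ^ N.factorization q)]
    rw [Finset.prod_sdiff hTpf]
    have := Nat.factorization_prod_pow_eq_self hN.ne'
    rw [← this]
    rw [Nat.factorization_prod_pow_eq_self hN.ne']
    rw [Finsupp.prod, Nat.support_factorization] at this
    exact this.symm
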